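/- arXiv:1110.0141 — 4 statements merged into one kernel-verified Lean document; each statement's English description precedes it below -/
import Mathlib

section
/- Assume Schanuel's conjecture: for any complex numbers z_1, ..., z_n that are linearly independent over ℚ, the field ℚ(z_1, ..., z_n, e^{z_1}, ..., e^{z_n}) has transcendence degree at least n over ℚ. Then: if x_1, ..., x_n are real numbers linearly independent over ℚ such that each e^{x_i} is algebraic over ℚ, the numbers x_1, ..., x_n are algebraically independent over ℚ. -/
/-!
Embed the `xᵢ` in `ℂ`. Schanuel's conjecture yields `n` algebraically independent numbers among
the `xᵢ` and the `e^{xᵢ}`. None of them can be an `e^{xᵢ}`, which is algebraic, so they are `n`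
of the `n` distinct numbers `xᵢ`, i.e. all of them.
-/

/-- Schanuel's conjecture: if `z₁,…,zₙ ∈ ℂ` are linearly independent over `ℚ`,
then the field `ℚ(z₁,…,zₙ, e^{z₁},…,e^{zₙ})` has transcendence degree at least
`n` over `ℚ`, i.e. among the generators `zᵢ, e^{zᵢ}` one can find `n` elements
that are algebraically independent over `ℚ`. -/
def SchanuelConjecture : Prop :=
  ∀ (n : ℕ) (z : Fin n → ℂ), LinearIndependent ℚ z →
    ∃ s : Finset ℂ,
      (s : Set ℂ) ⊆ Set.range z ∪ Set.range (fun i => Complex.exp (z i)) ∧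
      s.card = n ∧ AlgebraicIndependent ℚ (fun x : (s : Set ℂ) => (x : ℂ))

open Function Set

theorem Set.eq_range_of_subset_range_of_card_le {ι α : Type*} [Finite ι] {f : ι → α}
    (hf : Injective f) {s : Set α} (hs : s ⊆ range f) (hcard : Nat.card ι ≤ s.ncard) :
    s = range f :=
  eq_of_subset_of_ncard_le hs (by rwa [ncard_range_of_injective hf])

theorem AlgebraicIndependent.subset_left_of_subset_union {R A : Type*} [CommRing R] [CommRing A]
    [Algebra R A] {s t u : Set A} (hs : AlgebraicIndependent R ((↑) : s → A))
    (hst : s ⊆ t ∪ u) (hu : ∀ a ∈ u, IsAlgebraic R a) : s ⊆ t := by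
  intro a ha
  refine (hst ha).resolve_right fun hau => ?_
  exact hs.transcendental ⟨a, ha⟩ (hu a hau)

theorem LinearIndependent.complex_ofReal {ι : Type*} {x : ι → ℝ} (hx : LinearIndependent ℚ x) :
    LinearIndependent ℚ (fun i => (x i : ℂ)) :=
  hx.map' (Complex.ofRealAm.toLinearMap.restrictScalars ℚ)
    (LinearMap.ker_eq_bot.2 Complex.ofReal_injective)

theorem SchanuelConjecture.algebraicIndependent_of_isAlgebraic_exp (hSch : SchanuelConjecture)
    {n : ℕ} {z : Fin n → ℂ} (hz : LinearIndependent ℚ z)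
    (hexp : ∀ i, IsAlgebraic ℚ (Complex.exp (z i))) : AlgebraicIndependent ℚ z := by
  obtain ⟨s, hsub, hcard, hs⟩ := hSch n z hz
  have hs_range : (s : Set ℂ) = range z := by
    refine eq_range_of_subset_range_of_card_le hz.injective
      (hs.subset_left_of_subset_union hsub ?_) (by simp [hcard])
    rintro _ ⟨i, rfl⟩
    exact hexp i
  rw [← algebraicIndependent_subtype_range hz.injective, ← hs_range]
  exact hs

/-- Assuming Schanuel's conjecture, if `x₁,…,xₙ` are real numbers linearly
independent over `ℚ` such that each `e^{xᵢ}` is algebraic over `ℚ`, then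
`x₁,…,xₙ` are algebraically independent over `ℚ`. -/
theorem algebraicIndependent_of_linearIndependent_log_algebraic
    (hSch : SchanuelConjecture) (n : ℕ) (x : Fin n → ℝ)
    (hx : LinearIndependent ℚ x)
    (halg : ∀ i, IsAlgebraic ℚ (Real.exp (x i))) :
    AlgebraicIndependent ℚ x := by
  have hexp : ∀ i, IsAlgebraic ℚ (Complex.exp (x i)) := fun i => by
    simpa only [← Complex.ofReal_exp, Complex.coe_algebraMap] using (halg i).algebraMap (A := ℂ)
  exact (hSch.algebraicIndependent_of_isAlgebraic_exp hx.complex_ofReal hexp).of_comp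
    (Complex.ofRealAm.restrictScalars ℚ)
end

section
/- Assume Schanuel's conjecture. Let 𝒦 ⊆ ℂ be a subfield of transcendence degree at most d over ℚ, and let z_1, ..., z_n be complex numbers linearly independent over ℚ such that each e^{z_i} is algebraic over 𝒦. Then the transcendence degree of ℚ(z_1, ..., z_n) over ℚ is at least n − d. -/
/-!
Schanuel's conjecture yields `n` algebraically independent numbers among the `zᵢ` and `e^{zᵢ}`.
Those of the form `e^{zᵢ}` are algebraic over `𝒦`, so they lie in the closure of `𝒦` in the
matroid of algebraic independence over `ℚ`; that closure has rank at most `d`, hence at most `d`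
of the `n` numbers are exponentials and the remaining ones are `zᵢ`'s.
-/

open AlgebraicIndependent

theorem IsAlgebraic.adjoin_of_subring {R A : Type*} [CommRing R] [CommRing A] [Algebra R A]
    {S : Subring A} {a : A} (h : IsAlgebraic S a) :
    IsAlgebraic (Algebra.adjoin R (S : Set A)) a :=
  h.ringHom_of_comp_eq (Subring.inclusion (S := S)
      (T := (Algebra.adjoin R (S : Set A)).toSubring) Algebra.subset_adjoin)
    (RingHom.id A) (Subring.inclusion_injective _) rfl

theorem AlgebraicIndepOn.encard_le_of_forall_finset {R A : Type*} [CommRing R] [CommRing A]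
    [Algebra R A] {t u : Set A} {k : ℕ}
    (h : ∀ v : Finset A, (v : Set A) ⊆ t →
      AlgebraicIndependent R (fun x : (v : Set A) => (x : A)) → v.card ≤ k)
    (hu : AlgebraicIndepOn R id u) (hut : u ⊆ t) : u.encard ≤ k := by
  by_contra! hlt
  obtain ⟨v, hvu, hv⟩ := Set.exists_subset_encard_eq (Order.add_one_le_of_lt hlt)
  obtain ⟨F, rfl⟩ := (Set.finite_of_encard_eq_coe hv).exists_finset_coe
  have hF : F.card = k + 1 := by
    rw [Set.encard_coe_eq_coe_finsetCard] at hv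
    exact_mod_cast hv
  have := h F (hvu.trans hut) (hu.mono hvu)
  omega

theorem AlgebraicIndepOn.encard_le_of_forall_isAlgebraic {R A : Type*} [CommRing R]
    [CommRing A] [IsDomain A] [Algebra R A] [FaithfulSMul R A] {s t : Set A} {k : ℕ∞}
    (hs : AlgebraicIndepOn R id s) (hst : ∀ a ∈ s, IsAlgebraic (Algebra.adjoin R t) a)
    (ht : ∀ u ⊆ t, AlgebraicIndepOn R id u → u.encard ≤ k) : s.encard ≤ k := by
  let M := matroid R A
  calc s.encard ≤ M.eRk (M.closure t) :=
        (matroid_indep_iff.2 hs).encard_le_eRk_of_subset (by rw [matroid_closure_eq]; exact hst)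
    _ = M.eRk t := M.eRk_closure_eq t
    _ ≤ k := Matroid.eRk_le_iff.2 fun u hut hu ↦ ht u hut hu

/-- Assuming Schanuel's conjecture: if `𝒦 ⊆ ℂ` is a subfield of transcendence
degree at most `d` over `ℚ` (every `ℚ`-algebraically independent finite subset
of `𝒦` has at most `d` elements), and `z₁,…,zₙ` are complex numbers linearly
independent over `ℚ` with each `e^{zᵢ}` algebraic over `𝒦`, then the
transcendence degree of `ℚ(z₁,…,zₙ)` over `ℚ` is at least `n − d`, i.e. among
the `zᵢ` there are at least `n − d` elements algebraically independent over `ℚ`. -/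
theorem trdeg_ge_of_schanuel_exp_algebraic
    (hSch : SchanuelConjecture) (d n : ℕ) (𝒦 : Subfield ℂ)
    (h𝒦 : ∀ s : Finset ℂ, (s : Set ℂ) ⊆ (𝒦 : Set ℂ) →
      AlgebraicIndependent ℚ (fun x : (s : Set ℂ) => (x : ℂ)) → s.card ≤ d)
    (z : Fin n → ℂ) (hz : LinearIndependent ℚ z)
    (halg : ∀ i, IsAlgebraic 𝒦 (Complex.exp (z i))) :
    ∃ s : Finset ℂ, (s : Set ℂ) ⊆ Set.range z ∧ n - d ≤ s.card ∧
      AlgebraicIndependent ℚ (fun x : (s : Set ℂ) => (x : ℂ)) := by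
  classical
  obtain ⟨s, hs_sub, hs_card, hs_ind⟩ := hSch n z hz
  set lin := s.filter (· ∈ Set.range z)
  set exps := s.filter (· ∉ Set.range z)
  have hexps_alg : ∀ a ∈ (exps : Set ℂ), IsAlgebraic (Algebra.adjoin ℚ (𝒦 : Set ℂ)) a := by
    intro a ha
    simp only [exps, Finset.coe_filter, Set.mem_ofPred_eq] at ha
    obtain ⟨i, rfl⟩ := (hs_sub ha.1).resolve_left ha.2
    exact IsAlgebraic.adjoin_of_subring (S := 𝒦.toSubring) (halg i)
  have hexps_card : (exps : Set ℂ).encard ≤ d :=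
    AlgebraicIndepOn.encard_le_of_forall_isAlgebraic
      (hs_ind.mono (Finset.coe_subset.2 (s.filter_subset _))) hexps_alg
      fun u hu𝒦 hu ↦ hu.encard_le_of_forall_finset h𝒦 hu𝒦
  rw [Set.encard_coe_eq_coe_finsetCard, Nat.cast_le] at hexps_card
  have hsplit : lin.card + exps.card = s.card := s.card_filter_add_card_filter_not _
  exact ⟨lin, fun a ha ↦ (Finset.mem_filter.1 ha).2, by omega,
    hs_ind.mono (Finset.coe_subset.2 (s.filter_subset _))⟩
end

section
/- Let S_1, S_2 be subsets of ℝ of nonzero real numbers, and let F_i be the subfield of ℝ generated by S_i for i = 1, 2. Suppose there exists a finite set A ⊆ ℝ of positive reals such that every element of S_1 can be written as a·q·s with a ∈ A, q ∈ ℚ, and s ∈ S_2. Then the transcendence degree of the compositum F_1 F_2 over F_2 is at most |A|; in particular, it is finite. -/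
/-!
Every element of `S₁` is `a · q · s` with `a ∈ A` and `q · s ∈ F₂`, so `S₁ ∪ S₂` is algebraic
over the ring `F₂[A]`; since the elements of a field algebraic over a domain form a subfield, the
whole compositum `F₁F₂` is. In the algebraic matroid of `ℝ` over `F₂` this says that `F₁F₂` lies in
the closure of `A`, so an independent subset of it has at most `|A|` elements.
-/

open AlgebraicIndependent

theorem Subfield.isAlgebraic_of_mem_closure {R K : Type*} [CommRing R] [IsDomain R] [Field K]
    [Algebra R K] {s : Set K} (hs : ∀ x ∈ s, IsAlgebraic R x) {x : K}
    (hx : x ∈ Subfield.closure s) : IsAlgebraic R x :=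
  let C : Subfield K :=
    { (Subalgebra.algebraicClosure R K).toSubring with inv_mem' := fun _ hx ↦ IsAlgebraic.inv hx }
  (Subfield.closure_le (t := C)).2 hs hx

theorem AlgebraicIndepOn.encard_le_of_isAlgebraic_adjoin {R A : Type*} [CommRing R] [CommRing A]
    [IsDomain A] [Algebra R A] [FaithfulSMul R A] {I s : Set A} (hI : AlgebraicIndepOn R id I)
    (halg : ∀ a ∈ I, IsAlgebraic (Algebra.adjoin R s) a) : I.encard ≤ s.encard :=
  calc I.encard ≤ (matroid R A).eRk ((matroid R A).closure s) :=
        (matroid_indep_iff.2 hI).encard_le_eRk_of_subset (by rw [matroid_closure_eq]; exact halg)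
    _ = (matroid R A).eRk s := Matroid.eRk_closure_eq _ _
    _ ≤ s.encard := Matroid.eRk_le_encard _ _

theorem trdeg_compositum_le_of_similar_general
    (S₁ S₂ : Set ℝ)
    (A : Finset ℝ)
    (hsim : ∀ x ∈ S₁, ∃ a ∈ A, ∃ q : ℚ, ∃ s ∈ S₂, x = a * (q : ℝ) * s) :
    ∀ T : Finset ℝ,
      (T : Set ℝ) ⊆ ((Subfield.closure S₁ ⊔ Subfield.closure S₂ : Subfield ℝ) : Set ℝ) →
      AlgebraicIndependent (Subfield.closure S₂) (fun x : (T : Set ℝ) => (x : ℝ)) →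
      T.card ≤ A.card := by
  intro T hT hind
  set F := Subfield.closure S₂
  set R := Algebra.adjoin F (A : Set ℝ)
  have hF : ∀ x ∈ F, x ∈ R := fun x hx ↦ R.algebraMap_mem (⟨x, hx⟩ : F)
  have hgen : ∀ x ∈ S₁ ∪ S₂, IsAlgebraic R x := by
    rintro x (hx | hx)
    · obtain ⟨a, ha, q, s, hs, rfl⟩ := hsim x hx
      have hmem : a * q * s ∈ R := mul_mem (mul_mem (Algebra.subset_adjoin ha)
        (hF _ (SubfieldClass.ratCast_mem F q))) (hF _ (Subfield.subset_closure hs))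
      exact isAlgebraic_algebraMap (⟨_, hmem⟩ : R)
    · exact isAlgebraic_algebraMap (⟨x, hF x (Subfield.subset_closure hx)⟩ : R)
  have hcard := AlgebraicIndepOn.encard_le_of_isAlgebraic_adjoin hind fun t ht ↦
    Subfield.isAlgebraic_of_mem_closure hgen (Subfield.closure_union S₁ S₂ ▸ hT ht)
  simpa only [Set.encard_coe_eq_coe_finsetCard, Nat.cast_le] using hcard

/-- If `S₁, S₂ ⊆ ℝ` consist of nonzero reals, `Fᵢ` is the subfield of `ℝ`
generated by `Sᵢ`, and there is a finite set `A` of positive reals such that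
every element of `S₁` has the form `a·q·s` with `a ∈ A`, `q ∈ ℚ`, `s ∈ S₂`,
then the transcendence degree of the compositum `F₁F₂` over `F₂` is at most
`|A|` (in particular finite): every finite subset of `F₁ ⊔ F₂` that is
algebraically independent over `F₂` has at most `|A|` elements. -/
theorem trdeg_compositum_le_of_similar
    (S₁ S₂ : Set ℝ) (hS₁ : ∀ x ∈ S₁, x ≠ 0) (hS₂ : ∀ x ∈ S₂, x ≠ 0)
    (A : Finset ℝ) (hA : ∀ a ∈ A, 0 < a)
    (hsim : ∀ x ∈ S₁, ∃ a ∈ A, ∃ q : ℚ, ∃ s ∈ S₂, x = a * (q : ℝ) * s) :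
    ∀ T : Finset ℝ,
      (T : Set ℝ) ⊆ ((Subfield.closure S₁ ⊔ Subfield.closure S₂ : Subfield ℝ) : Set ℝ) →
      AlgebraicIndependent (Subfield.closure S₂) (fun x : (T : Set ℝ) => (x : ℝ)) →
      T.card ≤ A.card :=
  trdeg_compositum_le_of_similar_general S₁ S₂ A hsim
end

section
/- Let L be a field and let K_1, ..., K_m be finite Galois extensions of L contained in a common field with [K_1 ⋯ K_m : L] = ∏_{i=1}^m [K_i : L]. If a_i ∈ K_i^× for each i and the product a_1 ⋯ a_m lies in L, then each a_i lies in L. -/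
/-!
Degrees multiply at most under composita, so `[K₁⋯Kₘ : L] = ∏ [Kᵢ : L]` forces equality
`[Kᵢ ⊔ Bᵢ : L] = [Kᵢ : L] [Bᵢ : L]` for `Bᵢ` the compositum of the other `Kⱼ`. Hence `Kᵢ` and `Bᵢ`
are linearly disjoint and `Kᵢ ∩ Bᵢ = L`. Since `aᵢ = (∏ aⱼ) / ∏_{j ≠ i} aⱼ` lies in `Bᵢ`,
it lies in `Kᵢ ∩ Bᵢ = L`.
-/

open Module Finset

namespace IntermediateField

variable {L Ω ι : Type*} [Field L] [Field Ω] [Algebra L Ω]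

theorem mem_of_mul_mem_of_mem (F : IntermediateField L Ω) {x y : Ω} (hxy : x * y ∈ F)
    (hy : y ∈ F) (hy0 : y ≠ 0) : x ∈ F := by
  simpa [mul_assoc, hy0] using mul_mem hxy (inv_mem hy)

theorem finrank_biSup_le_prod [DecidableEq ι] (K : ι → IntermediateField L Ω) (s : Finset ι) :
    finrank L ↥(⨆ j ∈ s, K j) ≤ ∏ j ∈ s, finrank L (K j) := by
  induction s using Finset.induction with
  | empty =>
    rw [show ⨆ j ∈ (∅ : Finset ι), K j = ⊥ by simp]
    simp [IntermediateField.finrank_bot]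
  | insert i s hi ih =>
    rw [Finset.iSup_insert, prod_insert hi]
    exact (finrank_sup_le _ _).trans (Nat.mul_le_mul_left _ ih)

theorem iSup_eq_sup_biSup_erase [Fintype ι] [DecidableEq ι] (K : ι → IntermediateField L Ω)
    (i : ι) : ⨆ j, K j = K i ⊔ ⨆ j ∈ univ.erase i, K j := by
  rw [← Finset.iSup_insert, insert_erase (mem_univ i)]
  simp

theorem inf_biSup_erase_eq_bot_of_finrank_iSup_eq_prod [Fintype ι] [DecidableEq ι]
    (K : ι → IntermediateField L Ω) [∀ i, FiniteDimensional L (K i)]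
    (hdeg : finrank L ↥(⨆ i, K i) = ∏ i, finrank L (K i)) (i : ι) :
    K i ⊓ ⨆ j ∈ univ.erase i, K j = ⊥ := by
  refine (LinearDisjoint.of_finrank_sup ((finrank_sup_le _ _).antisymm ?_)).inf_eq_bot
  rw [← iSup_eq_sup_biSup_erase, hdeg, ← mul_prod_erase _ _ (mem_univ i)]
  exact Nat.mul_le_mul_left _ (finrank_biSup_le_prod K _)

end IntermediateField

open IntermediateField in
theorem mem_bot_of_prod_mem_bot_of_linearly_disjoint_general
    (L Ω : Type*) [Field L] [Field Ω] [Algebra L Ω] (m : ℕ)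
    (K : Fin m → IntermediateField L Ω)
    [∀ i, FiniteDimensional L (K i)]
    (hdeg : Module.finrank L ↥(⨆ i, K i) = ∏ i, Module.finrank L (K i))
    (a : Fin m → Ω) (ha : ∀ i, a i ∈ K i) (ha0 : ∀ i, a i ≠ 0)
    (hprod : (∏ i, a i) ∈ (⊥ : IntermediateField L Ω)) :
    ∀ i, a i ∈ (⊥ : IntermediateField L Ω) := by
  intro i
  set B := ⨆ j ∈ univ.erase i, K j
  have hrest : ∏ j ∈ univ.erase i, a j ∈ B :=
    prod_mem fun j hj => le_biSup K hj (ha j)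
  have hib : a i ∈ B := by
    refine B.mem_of_mul_mem_of_mem ?_ hrest (prod_ne_zero_iff.2 fun j _ => ha0 j)
    rw [mul_prod_erase _ _ (mem_univ i)]
    exact (bot_le (a := B)) hprod
  rw [← inf_biSup_erase_eq_bot_of_finrank_iSup_eq_prod K hdeg i]
  exact ⟨ha i, hib⟩

/-- Let `K₁, …, Kₘ` be finite Galois extensions of `L` inside a common field
`Ω` with `[K₁⋯Kₘ : L] = ∏ [Kᵢ : L]`. If `aᵢ ∈ Kᵢ` are nonzero and the product
`a₁ ⋯ aₘ` lies in `L`, then each `aᵢ` lies in `L`. -/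
theorem mem_bot_of_prod_mem_bot_of_linearly_disjoint
    (L Ω : Type*) [Field L] [Field Ω] [Algebra L Ω] (m : ℕ)
    (K : Fin m → IntermediateField L Ω)
    [∀ i, IsGalois L (K i)] [∀ i, FiniteDimensional L (K i)]
    (hdeg : Module.finrank L ↥(⨆ i, K i) = ∏ i, Module.finrank L (K i))
    (a : Fin m → Ω) (ha : ∀ i, a i ∈ K i) (ha0 : ∀ i, a i ≠ 0)
    (hprod : (∏ i, a i) ∈ (⊥ : IntermediateField L Ω)) :
    ∀ i, a i ∈ (⊥ : IntermediateField L Ω) :=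
  mem_bot_of_prod_mem_bot_of_linearly_disjoint_general L Ω m K hdeg a ha ha0 hprod
end
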